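/- Let x, y ∈ ℝⁿ with |x| < |y|, let e := (y − x)/|y − x|, and let T = {z : z·e = λ} be a hyperplane such that dist(x, T) ≥ dist(y, T) and x·e > λ > y·e or x·e < λ < y·e (i.e., T separates or at least the reflection of y across T is on the x-side). Then |y| − |x| ≤ 2 dist(0, T) = 2|λ|. -/

import Mathlib

/-!
Write `s = ⟪x, e⟫ - λ` and `t = ⟪y, e⟫ - λ` for the signed distances of `x` and `y` to `T`.
Since `e` is the unit vector from `x` to `y`, `t - s = ‖y - x‖ > 0`, so `|t| ≤ |s|` forces
`s + t ≤ 0`. As `(s + t + 2λ) ‖y - x‖ = ⟪x + y, y - x⟫ = ‖y‖² - ‖x‖²`, this gives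
`‖y‖² - ‖x‖² ≤ 2λ ‖y - x‖ ≤ 2|λ| (‖x‖ + ‖y‖)`, and dividing by `‖x‖ + ‖y‖` concludes.
-/

open RealInnerProductSpace

lemma add_nonpos_of_lt_of_abs_le {s t : ℝ} (hst : s < t) (h : |t| ≤ |s|) : s + t ≤ 0 := by
  cases abs_cases s <;> cases abs_cases t <;> linarith

section InnerProductSpace

variable {E : Type*} [NormedAddCommGroup E] [InnerProductSpace ℝ E]

lemma real_inner_inv_norm_smul_self (u : E) : ⟪u, ‖u‖⁻¹ • u⟫ = ‖u‖ := by
  rcases eq_or_ne u 0 with rfl | hu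
  · simp
  · rw [real_inner_smul_self_right]
    field_simp

lemma real_inner_add_sub_eq_sq_norm_sub_sq_norm (x y : E) :
    ⟪x + y, y - x⟫ = ‖y‖ ^ 2 - ‖x‖ ^ 2 := by
  rw [inner_add_left, inner_sub_right, inner_sub_right, real_inner_self_eq_norm_sq,
    real_inner_self_eq_norm_sq, real_inner_comm x y]
  ring

variable {x y e : E}

lemma inner_sub_inner_eq_norm_sub (he : e = ‖y - x‖⁻¹ • (y - x)) :
    ⟪y, e⟫ - ⟪x, e⟫ = ‖y - x‖ := by
  rw [← inner_sub_left, he, real_inner_inv_norm_smul_self]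

lemma inner_add_mul_norm_sub (he : e = ‖y - x‖⁻¹ • (y - x)) :
    ⟪x + y, e⟫ * ‖y - x‖ = ‖y‖ ^ 2 - ‖x‖ ^ 2 := by
  rw [← real_inner_add_sub_eq_sq_norm_sub_sq_norm, he, real_inner_smul_right]
  rcases eq_or_ne (y - x) 0 with h | h
  · simp [h]
  · field_simp

lemma sq_norm_sub_sq_norm_le_of_abs_inner_sub_le (he : e = ‖y - x‖⁻¹ • (y - x)) {lam : ℝ}
    (hdist : |⟪y, e⟫ - lam| ≤ |⟪x, e⟫ - lam|) :
    ‖y‖ ^ 2 - ‖x‖ ^ 2 ≤ 2 * lam * ‖y - x‖ := by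
  rcases eq_or_ne x y with rfl | hxy
  · simp
  have hpos : 0 < ‖y - x‖ := norm_pos_iff.mpr (sub_ne_zero.mpr hxy.symm)
  have hsum : (⟪x, e⟫ - lam) + (⟪y, e⟫ - lam) ≤ 0 :=
    add_nonpos_of_lt_of_abs_le (by linarith [inner_sub_inner_eq_norm_sub he]) hdist
  have hsum' : ⟪x + y, e⟫ ≤ 2 * lam := by rw [inner_add_left]; linarith
  rw [← inner_add_mul_norm_sub he]
  exact mul_le_mul_of_nonneg_right hsum' hpos.le

lemma norm_sub_norm_le_two_mul_abs_of_abs_inner_sub_le (he : e = ‖y - x‖⁻¹ • (y - x))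
    {lam : ℝ} (hdist : |⟪y, e⟫ - lam| ≤ |⟪x, e⟫ - lam|) :
    ‖y‖ - ‖x‖ ≤ 2 * |lam| := by
  rcases le_or_gt ‖y‖ ‖x‖ with hle | hlt
  · linarith [abs_nonneg lam]
  have hpos : 0 < ‖x‖ + ‖y‖ := by linarith [norm_nonneg x]
  refine le_of_mul_le_mul_right ?_ hpos
  calc (‖y‖ - ‖x‖) * (‖x‖ + ‖y‖) = ‖y‖ ^ 2 - ‖x‖ ^ 2 := by ring
    _ ≤ 2 * lam * ‖y - x‖ := sq_norm_sub_sq_norm_le_of_abs_inner_sub_le he hdist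
    _ ≤ 2 * |lam| * (‖x‖ + ‖y‖) := by
      gcongr
      · exact le_abs_self lam
      · linarith [norm_sub_le y x]

end InnerProductSpace

theorem stmt_2_general {n : ℕ} (x y : EuclideanSpace ℝ (Fin n))
    (e : EuclideanSpace ℝ (Fin n)) (he : e = ‖y - x‖⁻¹ • (y - x)) (lam : ℝ)
    -- `dist(x,T) ≥ dist(y,T)` for the hyperplane `T = {z : ⟪z,e⟫ = λ}`
    (hdist : |⟪x, e⟫ - lam| ≥ |⟪y, e⟫ - lam|) :
    ‖y‖ - ‖x‖ ≤ 2 * |lam| :=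
  norm_sub_norm_le_two_mul_abs_of_abs_inner_sub_le he hdist

theorem stmt_2 {n : ℕ} (x y : EuclideanSpace ℝ (Fin n)) (hxy : ‖x‖ < ‖y‖)
    (e : EuclideanSpace ℝ (Fin n)) (he : e = ‖y - x‖⁻¹ • (y - x)) (lam : ℝ)
    -- `dist(x,T) ≥ dist(y,T)` for the hyperplane `T = {z : ⟪z,e⟫ = λ}`
    (hdist : |⟪x, e⟫ - lam| ≥ |⟪y, e⟫ - lam|)
    -- the reflection `y'` of `y` across `T` lies on the `x`-side: `‖y'‖ ≥ ‖x‖`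
    (hrefl : ‖y - (2 * (⟪y, e⟫ - lam)) • e‖ ≥ ‖x‖) :
    ‖y‖ - ‖x‖ ≤ 2 * |lam| :=
  stmt_2_general x y e he lam hdist
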